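/- arXiv:2503.05875 — 8 statements merged into one kernel-verified Lean document; each statement's English description precedes it below -/
import Mathlib

section
/- Let φ : ℝ → ℝ be slope-restricted in [μ,ν] with μ ≤ 0 ≤ ν, and let M ∈ ℝ^{m×m} be doubly hyperdominant. Define Φ : ℝ^m → ℝ^m by Φ(ζ)_i = φ(ζ_i). Then for all ζ ∈ ℝ^m, (νζ - Φ(ζ))ᵀ M (Φ(ζ) - μζ) + (Φ(ζ) - μζ)ᵀ Mᵀ (νζ - Φ(ζ)) ≥ 0. -/
/-!
Write `a = ν ζ - Φ(ζ)` and `b = Φ(ζ) - μ ζ`. Slope restriction makes `x ↦ ν x - φ x` and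
`x ↦ φ x - μ x` similarly ordered, and `φ 0 = 0` gives `aᵢ bᵢ ≥ 0`, so every index has `a` and `b`
both nonnegative or both nonpositive. The inequality is `2 aᵀ M b ≥ 0`. Across the two sign classes
the terms `aᵢ Mᵢⱼ bⱼ` are nonnegative because `Mᵢⱼ ≤ 0` off the diagonal. Within a sign class,
`a` and `b` are similarly ordered and of one sign: subtract their values at an index minimising
`a + b`; the constant parts contribute row and column sums of `M` over the class, which dominate
the full (nonnegative) ones, and what remains vanishes at that index, so induction on the class
finishes.
-/

open Finset

namespace Matrix

variable {ι R : Type*} [Fintype ι] [CommRing R] [LinearOrder R]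

structure IsDoublyHyperdominant (M : Matrix ι ι R) : Prop where
  offDiag_nonpos : ∀ i j, i ≠ j → M i j ≤ 0
  sum_row_nonneg : ∀ i, 0 ≤ ∑ j, M i j
  sum_col_nonneg : ∀ j, 0 ≤ ∑ i, M i j

namespace IsDoublyHyperdominant

variable {M : Matrix ι ι R}

theorem transpose (hM : M.IsDoublyHyperdominant) : Mᵀ.IsDoublyHyperdominant where
  offDiag_nonpos i j hij := hM.offDiag_nonpos j i hij.symm
  sum_row_nonneg := hM.sum_col_nonneg
  sum_col_nonneg := hM.sum_row_nonneg

variable [IsStrictOrderedRing R] [DecidableEq ι]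

theorem sum_row_nonneg_of_mem (hM : M.IsDoublyHyperdominant) {s : Finset ι} {i : ι}
    (hi : i ∈ s) : 0 ≤ ∑ j ∈ s, M i j := by
  have hout : ∑ j ∈ sᶜ, M i j ≤ 0 :=
    sum_nonpos fun j hj => hM.offDiag_nonpos i j fun h => mem_compl.1 hj (h ▸ hi)
  linarith [sum_add_sum_compl s (M i), hM.sum_row_nonneg i]

theorem sum_sum_mul_left_nonneg (hM : M.IsDoublyHyperdominant) {s : Finset ι} {c : ι → R}
    (hc : ∀ i ∈ s, 0 ≤ c i) : 0 ≤ ∑ i ∈ s, ∑ j ∈ s, c i * M i j := by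
  simp only [← mul_sum]
  exact sum_nonneg fun i hi => mul_nonneg (hc i hi) (hM.sum_row_nonneg_of_mem hi)

theorem sum_sum_mul_right_nonneg (hM : M.IsDoublyHyperdominant) {s : Finset ι} {c : ι → R}
    (hc : ∀ j ∈ s, 0 ≤ c j) : 0 ≤ ∑ i ∈ s, ∑ j ∈ s, M i j * c j := by
  rw [sum_comm]
  simpa only [mul_comm, transpose_apply] using hM.transpose.sum_sum_mul_left_nonneg hc

theorem sum_sum_mul_nonneg_of_monovaryOn (hM : M.IsDoublyHyperdominant) (s : Finset ι)
    {a b : ι → R} (ha : ∀ i ∈ s, 0 ≤ a i) (hb : ∀ i ∈ s, 0 ≤ b i)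
    (hab : MonovaryOn a b s) : 0 ≤ ∑ i ∈ s, ∑ j ∈ s, a i * M i j * b j := by
  induction s using Finset.strongInduction generalizing a b with
  | H s ih =>
  rcases s.eq_empty_or_nonempty with rfl | hs
  · simp
  obtain ⟨k, hk, hmin⟩ := s.exists_min_image (fun i => a i + b i) hs
  have hak : ∀ i ∈ s, a k ≤ a i := fun i hi => not_lt.1 fun h =>
    (hmin i hi).not_gt (add_lt_add_of_lt_of_le h (hab.symm hi hk h))
  have hbk : ∀ i ∈ s, b k ≤ b i := fun i hi => not_lt.1 fun h =>
    (hmin i hi).not_gt (add_lt_add_of_le_of_lt (hab hi hk h) h)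
  set a' := fun i => a i - a k
  set b' := fun j => b j - b k
  have hsplit : ∑ i ∈ s, ∑ j ∈ s, a i * M i j * b j =
      ∑ i ∈ s, ∑ j ∈ s, a' i * M i j * b' j + a k * ∑ i ∈ s, ∑ j ∈ s, M i j * b' j
        + b k * ∑ i ∈ s, ∑ j ∈ s, a' i * M i j + ∑ i ∈ s, ∑ j ∈ s, (a k * b k) * M i j := by
    simp only [mul_sum, ← sum_add_distrib]
    exact sum_congr rfl fun i _ => sum_congr rfl fun j _ => by ring
  have herase : ∑ i ∈ s, ∑ j ∈ s, a' i * M i j * b' j =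
      ∑ i ∈ s.erase k, ∑ j ∈ s.erase k, a' i * M i j * b' j := by
    rw [sum_erase s (by simp [a'])]
    exact sum_congr rfl fun i _ => (sum_erase s (by simp [b'])).symm
  have hrest : 0 ≤ ∑ i ∈ s.erase k, ∑ j ∈ s.erase k, a' i * M i j * b' j :=
    ih _ (erase_ssubset hk)
      (fun i hi => sub_nonneg.2 (hak i (mem_of_mem_erase hi)))
      (fun i hi => sub_nonneg.2 (hbk i (mem_of_mem_erase hi)))
      (fun i hi j hj h => sub_le_sub_right
        (hab (mem_of_mem_erase hi) (mem_of_mem_erase hj) (sub_lt_sub_iff_right _ |>.1 h)) _)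
  rw [hsplit, herase]
  refine add_nonneg (add_nonneg (add_nonneg hrest ?_) ?_) ?_
  · exact mul_nonneg (ha k hk) (hM.sum_sum_mul_right_nonneg fun j hj => sub_nonneg.2 (hbk j hj))
  · exact mul_nonneg (hb k hk) (hM.sum_sum_mul_left_nonneg fun i hi => sub_nonneg.2 (hak i hi))
  · exact hM.sum_sum_mul_left_nonneg fun _ _ => mul_nonneg (ha k hk) (hb k hk)

theorem dotProduct_mulVec_nonneg_of_monovary (hM : M.IsDoublyHyperdominant) {a b : ι → R}
    (hab : Monovary a b) (hdiag : ∀ i, 0 ≤ a i * b i) : 0 ≤ a ⬝ᵥ M *ᵥ b := by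
  set H := univ.filter fun i => 0 ≤ a i ∧ 0 ≤ b i
  have hH : ∀ i ∈ H, 0 ≤ a i ∧ 0 ≤ b i := fun i hi => (mem_filter.1 hi).2
  have hHc : ∀ i ∈ Hᶜ, a i ≤ 0 ∧ b i ≤ 0 := fun i hi =>
    (mul_nonneg_iff.1 (hdiag i)).resolve_left fun h => mem_compl.1 hi (mem_filter.2 ⟨mem_univ i, h⟩)
  have hne : ∀ i ∈ H, ∀ j ∈ Hᶜ, i ≠ j := fun i hi j hj => ne_of_mem_of_not_mem hi (mem_compl.1 hj)
  have hsplit (f : ι → R) : ∑ i, f i = ∑ i ∈ H, f i + ∑ i ∈ Hᶜ, f i := (sum_add_sum_compl H f).symm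
  have hHH := hM.sum_sum_mul_nonneg_of_monovaryOn H (fun i hi => (hH i hi).1)
    (fun i hi => (hH i hi).2) (hab.monovaryOn _)
  have hLL := hM.sum_sum_mul_nonneg_of_monovaryOn Hᶜ (a := -a) (b := -b)
    (fun i hi => neg_nonneg.2 (hHc i hi).1) (fun i hi => neg_nonneg.2 (hHc i hi).2)
    (fun i _ j _ h => neg_le_neg (hab (neg_lt_neg_iff.1 h)))
  simp only [Pi.neg_apply, neg_mul, mul_neg, neg_neg] at hLL
  have hHL : 0 ≤ ∑ i ∈ H, ∑ j ∈ Hᶜ, a i * M i j * b j :=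
    sum_nonneg fun i hi => sum_nonneg fun j hj => mul_nonneg_of_nonpos_of_nonpos
      (mul_nonpos_of_nonneg_of_nonpos (hH i hi).1 (hM.offDiag_nonpos i j (hne i hi j hj)))
      (hHc j hj).2
  have hLH : 0 ≤ ∑ i ∈ Hᶜ, ∑ j ∈ H, a i * M i j * b j :=
    sum_nonneg fun i hi => sum_nonneg fun j hj => mul_nonneg
      (mul_nonneg_of_nonpos_of_nonpos (hHc i hi).1 (hM.offDiag_nonpos i j (hne j hj i hi).symm))
      (hH j hj).2
  have hexp : a ⬝ᵥ M *ᵥ b = ∑ i, ∑ j, a i * M i j * b j := by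
    simp only [dotProduct, mulVec, mul_sum, mul_assoc]
  rw [hexp, hsplit]
  simp only [hsplit, sum_add_distrib]
  exact add_nonneg (add_nonneg hHH hHL) (add_nonneg hLH hLL)

end IsDoublyHyperdominant

end Matrix

theorem monovary_of_slope {φ : ℝ → ℝ} {μ ν : ℝ}
    (hslope : ∀ p q : ℝ, p ≠ q → μ ≤ (φ p - φ q) / (p - q) ∧ (φ p - φ q) / (p - q) ≤ ν) :
    Monovary (fun x => ν * x - φ x) (fun x => φ x - μ * x) := by
  refine monovary_iff_forall_mul_nonneg.2 fun p q => ?_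
  rcases eq_or_ne q p with rfl | hqp
  · simp
  obtain ⟨s, ⟨hμs, hsν⟩, hφ⟩ : ∃ s, (μ ≤ s ∧ s ≤ ν) ∧ φ q - φ p = s * (q - p) :=
    ⟨_, hslope q p hqp, (div_mul_cancel₀ _ (sub_ne_zero.2 hqp)).symm⟩
  calc (0 : ℝ) ≤ (ν - s) * (s - μ) * (q - p) ^ 2 :=
        mul_nonneg (mul_nonneg (sub_nonneg.2 hsν) (sub_nonneg.2 hμs)) (sq_nonneg _)
    _ = _ := by linear_combination (φ q - φ p + s * (q - p) - (ν + μ) * (q - p)) * hφ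

open Matrix

theorem stmt_2_general {m : ℕ} (μ ν : ℝ)
    (φ : ℝ → ℝ) (h0 : φ 0 = 0)
    (hslope : ∀ p q : ℝ, p ≠ q → μ ≤ (φ p - φ q) / (p - q) ∧ (φ p - φ q) / (p - q) ≤ ν)
    (M : Matrix (Fin m) (Fin m) ℝ)
    (hZ : ∀ i j, i ≠ j → M i j ≤ 0)
    (hrow : ∀ i, 0 ≤ ∑ j, M i j)
    (hcol : ∀ j, 0 ≤ ∑ i, M i j)
    (ζ : Fin m → ℝ) :
    0 ≤ (ν • ζ - fun i => φ (ζ i)) ⬝ᵥ M.mulVec ((fun i => φ (ζ i)) - μ • ζ)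
      + ((fun i => φ (ζ i)) - μ • ζ) ⬝ᵥ Mᵀ.mulVec (ν • ζ - fun i => φ (ζ i)) := by
  have hM : M.IsDoublyHyperdominant := ⟨hZ, hrow, hcol⟩
  have hmono : Monovary (ν • ζ - fun i => φ (ζ i)) ((fun i => φ (ζ i)) - μ • ζ) :=
    (monovary_of_slope hslope).comp_right ζ
  have hdiag : ∀ i, 0 ≤ (ν • ζ - fun i => φ (ζ i)) i * ((fun i => φ (ζ i)) - μ • ζ) i := by
    intro i
    simpa [h0] using (monovary_of_slope hslope).sub_mul_sub_nonneg 0 (ζ i)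
  rw [dotProduct_transpose_mulVec]
  have h := hM.dotProduct_mulVec_nonneg_of_monovary hmono hdiag
  exact add_nonneg h h

/-- Static O'Shea–Zames–Falb multiplier inequality for slope-restricted repeated
nonlinearities and doubly hyperdominant `M`. -/
theorem stmt_2 {m : ℕ} (μ ν : ℝ) (hμ : μ ≤ 0) (hν : 0 ≤ ν)
    (φ : ℝ → ℝ) (h0 : φ 0 = 0)
    (hslope : ∀ p q : ℝ, p ≠ q → μ ≤ (φ p - φ q) / (p - q) ∧ (φ p - φ q) / (p - q) ≤ ν)
    (M : Matrix (Fin m) (Fin m) ℝ)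
    (hZ : ∀ i j, i ≠ j → M i j ≤ 0)
    (hrow : ∀ i, 0 ≤ ∑ j, M i j)
    (hcol : ∀ j, 0 ≤ ∑ i, M i j)
    (ζ : Fin m → ℝ) :
    0 ≤ (ν • ζ - fun i => φ (ζ i)) ⬝ᵥ M.mulVec ((fun i => φ (ζ i)) - μ • ζ)
      + ((fun i => φ (ζ i)) - μ • ζ) ⬝ᵥ Mᵀ.mulVec (ν • ζ - fun i => φ (ζ i)) :=
  stmt_2_general μ ν φ h0 hslope M hZ hrow hcol ζ
end

section
/- Let φ : ℝ → ℝ be odd and slope-restricted in [μ,ν] with μ ≤ 0 ≤ ν, and let M ∈ ℝ^{m×m} be doubly dominant. Define Φ : ℝ^m → ℝ^m by Φ(ζ)_i = φ(ζ_i). Then for all ζ ∈ ℝ^m, (νζ - Φ(ζ))ᵀ M (Φ(ζ) - μζ) + (Φ(ζ) - μζ)ᵀ Mᵀ (νζ - Φ(ζ)) ≥ 0. -/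
/-!
With `F t = ν t - φ t` and `G t = φ t - μ t`, both odd and monotone by the slope restriction, the
form equals `2 (F ∘ ζ)ᵀ M (G ∘ ζ)`. Conjugating `M` by the diagonal matrix `D` of signs of `ζ`
turns this into `(F ∘ |ζ|)ᵀ (D M D) (G ∘ |ζ|)`, and `D M D` is again doubly dominant because
`|·|_d` ignores signs. Double dominance makes every principal submatrix have nonnegative row and
column sums, and for such a matrix `aᵀ M b ≥ 0` whenever `a`, `b` are nonnegative and similarly
ordered: subtracting their values at the index where they are smallest leaves a form of the same
kind on fewer indices plus a row-sum term and a column-sum term, both nonnegative.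
-/

open Matrix

/-- `|M|_d`: diagonal entries kept, off-diagonal entries replaced by `-|M i j|`. -/
def absd {m : ℕ} (M : Matrix (Fin m) (Fin m) ℝ) : Matrix (Fin m) (Fin m) ℝ :=
  Matrix.of fun i j => if i = j then M i i else -|M i j|

open Finset

section MonotoneBilinear

variable {ι α R : Type*} [DecidableEq ι] [LinearOrder α]
  [CommRing R] [LinearOrder R] [IsStrictOrderedRing R]

theorem sum_sum_mul_nonneg_of_monotone (M : Matrix ι ι R)
    (hrow : ∀ s : Finset ι, ∀ i ∈ s, 0 ≤ ∑ j ∈ s, M i j)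
    (hcol : ∀ s : Finset ι, ∀ j ∈ s, 0 ≤ ∑ i ∈ s, M i j)
    (x : ι → α) {f g : α → R} (hf : Monotone f) (hg : Monotone g) (s : Finset ι)
    (hfs : ∀ i ∈ s, 0 ≤ f (x i)) (hgs : ∀ i ∈ s, 0 ≤ g (x i)) :
    0 ≤ ∑ i ∈ s, ∑ j ∈ s, M i j * (f (x i) * g (x j)) := by
  induction s using Finset.strongInduction generalizing f g with
  | _ s ih =>
  rcases s.eq_empty_or_nonempty with rfl | hs
  · simp
  obtain ⟨k, hk, hmin⟩ := s.exists_min_image x hs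
  -- Shifting `f` and `g` by their values at the minimiser of `x` kills row and column `k`.
  have hshift : 0 ≤ ∑ i ∈ s, ∑ j ∈ s, M i j * ((f (x i) - f (x k)) * (g (x j) - g (x k))) := by
    rw [← sum_erase s (a := k) (by simp)]
    rw [sum_congr rfl fun i _ => (sum_erase s (a := k) (by simp)).symm]
    refine ih _ (erase_ssubset hk) (f := fun t => f t - f (x k)) (g := fun t => g t - g (x k))
      (fun _ _ h => sub_le_sub_right (hf h) _) (fun _ _ h => sub_le_sub_right (hg h) _)
      (fun i hi => ?_) (fun i hi => ?_)
    · exact sub_nonneg.2 (hf (hmin i (mem_of_mem_erase hi)))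
    · exact sub_nonneg.2 (hg (hmin i (mem_of_mem_erase hi)))
  have hrows : 0 ≤ ∑ i ∈ s, ∑ j ∈ s, M i j * (f (x i) * g (x k)) := by
    refine sum_nonneg fun i hi => ?_
    rw [← sum_mul]
    exact mul_nonneg (hrow s i hi) (mul_nonneg (hfs i hi) (hgs k hk))
  have hcols : 0 ≤ ∑ i ∈ s, ∑ j ∈ s, M i j * (f (x k) * (g (x j) - g (x k))) := by
    rw [sum_comm]
    refine sum_nonneg fun j hj => ?_
    rw [← sum_mul]
    exact mul_nonneg (hcol s j hj) (mul_nonneg (hfs k hk) (sub_nonneg.2 (hg (hmin j hj))))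
  have hsplit : ∑ i ∈ s, ∑ j ∈ s, M i j * (f (x i) * g (x j))
      = ∑ i ∈ s, ∑ j ∈ s, M i j * ((f (x i) - f (x k)) * (g (x j) - g (x k)))
        + ∑ i ∈ s, ∑ j ∈ s, M i j * (f (x i) * g (x k))
        + ∑ i ∈ s, ∑ j ∈ s, M i j * (f (x k) * (g (x j) - g (x k))) := by
    simp only [← sum_add_distrib]
    exact sum_congr rfl fun i _ => sum_congr rfl fun j _ => by ring
  rw [hsplit]
  exact add_nonneg (add_nonneg hshift hrows) hcols

theorem dotProduct_mulVec_nonneg_of_monotone [Fintype ι] (M : Matrix ι ι R)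
    (hrow : ∀ s : Finset ι, ∀ i ∈ s, 0 ≤ ∑ j ∈ s, M i j)
    (hcol : ∀ s : Finset ι, ∀ j ∈ s, 0 ≤ ∑ i ∈ s, M i j)
    (x : ι → α) {f g : α → R} (hf : Monotone f) (hg : Monotone g)
    (hfx : ∀ i, 0 ≤ f (x i)) (hgx : ∀ i, 0 ≤ g (x i)) :
    0 ≤ (fun i => f (x i)) ⬝ᵥ M *ᵥ fun j => g (x j) := by
  simpa [dotProduct, mulVec, mul_sum, mul_left_comm] using
    sum_sum_mul_nonneg_of_monotone M hrow hcol x hf hg univ (fun i _ => hfx i) fun i _ => hgx i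

end MonotoneBilinear

section DoublyDominant

variable {m : ℕ}

theorem absd_le (M : Matrix (Fin m) (Fin m) ℝ) (i j : Fin m) : absd M i j ≤ M i j := by
  by_cases h : i = j
  · simp [absd, h]
  · simpa [absd, h] using neg_abs_le (M i j)

theorem absd_nonpos (M : Matrix (Fin m) (Fin m) ℝ) {i j : Fin m} (h : i ≠ j) : absd M i j ≤ 0 := by
  simp [absd, h]

theorem absd_transpose (M : Matrix (Fin m) (Fin m) ℝ) : absd Mᵀ = (absd M)ᵀ := by
  ext i j
  by_cases h : i = j
  · simp [absd, h]
  · simp [absd, h, Ne.symm h]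

theorem absd_diagonal_mul_mul_diagonal (M : Matrix (Fin m) (Fin m) ℝ) {σ : Fin m → ℝ}
    (hσ : ∀ i, |σ i| = 1) : absd (diagonal σ * M * diagonal σ) = absd M := by
  ext i j
  by_cases h : i = j
  · subst h
    have : σ i * σ i = 1 := by rw [← abs_mul_abs_self, hσ, one_mul]
    simp only [absd, mul_diagonal, diagonal_mul, of_apply, ↓reduceIte]
    linear_combination M i i * this
  · simp [absd, h, diagonal_mul, mul_diagonal, abs_mul, hσ]

theorem sum_nonneg_of_absd_row (M : Matrix (Fin m) (Fin m) ℝ) (hrow : ∀ i, 0 ≤ ∑ j, absd M i j)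
    (s : Finset (Fin m)) {i : Fin m} (hi : i ∈ s) : 0 ≤ ∑ j ∈ s, M i j :=
  calc 0 ≤ ∑ j, absd M i j := hrow i
    _ ≤ ∑ j ∈ s, absd M i j :=
      sum_le_sum_of_subset_of_nonpos' (subset_univ s) fun _ _ hj =>
        absd_nonpos M fun h => hj (h ▸ hi)
    _ ≤ ∑ j ∈ s, M i j := sum_le_sum fun j _ => absd_le M i j

theorem sum_nonneg_of_absd_col (M : Matrix (Fin m) (Fin m) ℝ) (hcol : ∀ j, 0 ≤ ∑ i, absd M i j)
    (s : Finset (Fin m)) {j : Fin m} (hj : j ∈ s) : 0 ≤ ∑ i ∈ s, M i j :=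
  sum_nonneg_of_absd_row Mᵀ (by simpa [absd_transpose] using hcol) s hj

end DoublyDominant

theorem mulVec_dotProduct_mulVec_mulVec {n R : Type*} [Fintype n] [CommSemiring R]
    (A M B : Matrix n n R) (u v : n → R) :
    (A *ᵥ u) ⬝ᵥ M *ᵥ (B *ᵥ v) = u ⬝ᵥ (Aᵀ * M * B) *ᵥ v := by
  rw [Matrix.mul_assoc, ← mulVec_mulVec, dotProduct_mulVec u, vecMul_transpose, mulVec_mulVec]

theorem monotone_mul_sub_of_slope_le {φ : ℝ → ℝ} {ν : ℝ}
    (h : ∀ p q, p ≠ q → (φ p - φ q) / (p - q) ≤ ν) : Monotone fun t => ν * t - φ t := by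
  intro u v huv
  rcases huv.eq_or_lt with rfl | hlt
  · rfl
  · have := (div_le_iff₀ (sub_pos.2 hlt)).1 (h v u hlt.ne')
    dsimp only
    linarith

theorem monotone_sub_mul_of_le_slope {φ : ℝ → ℝ} {μ : ℝ}
    (h : ∀ p q, p ≠ q → μ ≤ (φ p - φ q) / (p - q)) : Monotone fun t => φ t - μ * t := by
  intro u v huv
  rcases huv.eq_or_lt with rfl | hlt
  · rfl
  · have := (le_div_iff₀ (sub_pos.2 hlt)).1 (h v u hlt.ne')
    dsimp only
    linarith

theorem Function.Odd.apply_eq_ite_mul_apply_abs {h : ℝ → ℝ} (hodd : h.Odd) (t : ℝ) :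
    h t = (if t < 0 then -1 else 1) * h |t| := by
  split_ifs with ht
  · rw [abs_of_neg ht, hodd.eq, neg_one_mul, neg_neg]
  · rw [abs_of_nonneg (not_lt.1 ht), one_mul]

theorem stmt_3_general {m : ℕ} (μ ν : ℝ)
    (φ : ℝ → ℝ) (hodd : ∀ t : ℝ, φ (-t) = -φ t)
    (hslope : ∀ p q : ℝ, p ≠ q → μ ≤ (φ p - φ q) / (p - q) ∧ (φ p - φ q) / (p - q) ≤ ν)
    (M : Matrix (Fin m) (Fin m) ℝ)
    (hrow : ∀ i, 0 ≤ ∑ j, absd M i j)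
    (hcol : ∀ j, 0 ≤ ∑ i, absd M i j)
    (ζ : Fin m → ℝ) :
    0 ≤ (ν • ζ - fun i => φ (ζ i)) ⬝ᵥ M.mulVec ((fun i => φ (ζ i)) - μ • ζ)
      + ((fun i => φ (ζ i)) - μ • ζ) ⬝ᵥ Mᵀ.mulVec (ν • ζ - fun i => φ (ζ i)) := by
  set F : ℝ → ℝ := fun t => ν * t - φ t
  set G : ℝ → ℝ := fun t => φ t - μ * t
  have hFodd : F.Odd := fun t => by simp only [F, hodd]; ring
  have hGodd : G.Odd := fun t => by simp only [G, hodd]; ring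
  have hFmono : Monotone F := monotone_mul_sub_of_slope_le fun p q h => (hslope p q h).2
  have hGmono : Monotone G := monotone_sub_mul_of_le_slope fun p q h => (hslope p q h).1
  set σ : Fin m → ℝ := fun i => if ζ i < 0 then -1 else 1
  have hσ : ∀ i, |σ i| = 1 := fun i => by simp only [σ]; split_ifs <;> simp
  have hflip : ∀ {h : ℝ → ℝ}, h.Odd → (fun i => h (ζ i)) = diagonal σ *ᵥ fun i => h |ζ i| :=
    fun ho => funext fun i => by rw [mulVec_diagonal, ho.apply_eq_ite_mul_apply_abs]
  have hM := absd_diagonal_mul_mul_diagonal M hσ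
  have key := dotProduct_mulVec_nonneg_of_monotone (diagonal σ * M * diagonal σ)
    (sum_nonneg_of_absd_row _ (hM ▸ hrow)) (sum_nonneg_of_absd_col _ (hM ▸ hcol))
    (fun i => |ζ i|) hFmono hGmono
    (fun i => hFodd.map_zero.symm.le.trans (hFmono (abs_nonneg _)))
    (fun i => hGodd.map_zero.symm.le.trans (hGmono (abs_nonneg _)))
  have hquad : (fun i => F (ζ i)) ⬝ᵥ M *ᵥ (fun i => G (ζ i))
      = (fun i => F |ζ i|) ⬝ᵥ (diagonal σ * M * diagonal σ) *ᵥ fun i => G |ζ i| := by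
    rw [hflip hFodd, hflip hGodd, mulVec_dotProduct_mulVec_mulVec, diagonal_transpose]
  change 0 ≤ (fun i => F (ζ i)) ⬝ᵥ M *ᵥ (fun i => G (ζ i))
    + (fun i => G (ζ i)) ⬝ᵥ Mᵀ *ᵥ (fun i => F (ζ i))
  rw [dotProduct_transpose_mulVec, hquad]
  linarith

/-- Static O'Shea–Zames–Falb multiplier inequality for odd slope-restricted repeated
nonlinearities and doubly dominant `M`. -/
theorem stmt_3 {m : ℕ} (μ ν : ℝ) (hμ : μ ≤ 0) (hν : 0 ≤ ν)
    (φ : ℝ → ℝ) (h0 : φ 0 = 0) (hodd : ∀ t : ℝ, φ (-t) = -φ t)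
    (hslope : ∀ p q : ℝ, p ≠ q → μ ≤ (φ p - φ q) / (p - q) ∧ (φ p - φ q) / (p - q) ≤ ν)
    (M : Matrix (Fin m) (Fin m) ℝ)
    (hrow : ∀ i, 0 ≤ ∑ j, absd M i j)
    (hcol : ∀ j, 0 ≤ ∑ i, absd M i j)
    (ζ : Fin m → ℝ) :
    0 ≤ (ν • ζ - fun i => φ (ζ i)) ⬝ᵥ M.mulVec ((fun i => φ (ζ i)) - μ • ζ)
      + ((fun i => φ (ζ i)) - μ • ζ) ⬝ᵥ Mᵀ.mulVec (ν • ζ - fun i => φ (ζ i)) :=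
  stmt_3_general μ ν φ hodd hslope M hrow hcol ζ
end

section
/- Let z, w, f, g ∈ ℝ^m with f ≥ 0 and g ≥ 0 entrywise, and let X ∈ ℝ^{m×m} have zero diagonal and nonpositive off-diagonal entries. Suppose w(z-w)ᵀ = 𝟙fᵀ + g𝟙ᵀ + X. Then for any indices i ≠ j with z_i = z_j, it holds that w_i = w_j. -/
/-!
Testing the identity `w (z - w)ᵀ = 𝟙 fᵀ + g 𝟙ᵀ + X` against `(eᵢ - eⱼ)` on both sides kills the
rank-one terms `𝟙 fᵀ` and `g 𝟙ᵀ` and leaves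
`(wᵢ - wⱼ)(zᵢ - zⱼ) - (wᵢ - wⱼ)² = -Xᵢⱼ - Xⱼᵢ ≥ 0`, so `zᵢ = zⱼ` forces `wᵢ = wⱼ`.
-/

open Matrix

namespace Matrix

variable {n R : Type*} [CommRing R]

/-- The quadratic form of `M` at `eᵢ - eⱼ`. -/
def crossDiff (M : Matrix n n R) (i j : n) : R :=
  M i i + M j j - M i j - M j i

theorem crossDiff_add (M N : Matrix n n R) (i j : n) :
    crossDiff (M + N) i j = crossDiff M i j + crossDiff N i j := by
  simp only [crossDiff, add_apply]
  ring

theorem crossDiff_vecMulVec (u v : n → R) (i j : n) :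
    crossDiff (vecMulVec u v) i j = (u i - u j) * (v i - v j) := by
  simp only [crossDiff, vecMulVec_apply]
  ring

end Matrix

theorem stmt_6_general {m : ℕ} (z w f g : Fin m → ℝ)
    (X : Matrix (Fin m) (Fin m) ℝ)
    (hXd : ∀ i, X i i = 0) (hXod : ∀ i j, i ≠ j → X i j ≤ 0)
    (heq : vecMulVec w (z - w) =
      vecMulVec (fun _ => (1 : ℝ)) f + vecMulVec g (fun _ => (1 : ℝ)) + X)
    (i j : Fin m) (hij : i ≠ j) (hz : z i = z j) :
    w i = w j := by
  have hcross := congrArg (fun M => crossDiff M i j) heq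
  simp only [crossDiff_add, crossDiff_vecMulVec, Pi.sub_apply, sub_self, zero_mul, mul_zero,
    zero_add] at hcross
  have hX : crossDiff X i j = -X i j - X j i := by
    simp only [crossDiff, hXd]
    ring
  have hsq : (w i - w j) ^ 2 = X i j + X j i := by
    rw [hX, hz] at hcross
    linear_combination -hcross
  have hsq_nonpos : (w i - w j) ^ 2 ≤ 0 := hsq ▸ add_nonpos (hXod i j hij) (hXod j i hij.symm)
  exact sub_eq_zero.mp (pow_eq_zero_iff two_ne_zero |>.mp (le_antisymm hsq_nonpos (sq_nonneg _)))

/-- Equal `z`-components force equal `w`-components under the dual decomposition. -/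
theorem stmt_6 {m : ℕ} (z w f g : Fin m → ℝ)
    (hf : ∀ i, 0 ≤ f i) (hg : ∀ i, 0 ≤ g i)
    (X : Matrix (Fin m) (Fin m) ℝ)
    (hXd : ∀ i, X i i = 0) (hXod : ∀ i j, i ≠ j → X i j ≤ 0)
    (heq : vecMulVec w (z - w) =
      vecMulVec (fun _ => (1 : ℝ)) f + vecMulVec g (fun _ => (1 : ℝ)) + X)
    (i j : Fin m) (hij : i ≠ j) (hz : z i = z j) :
    w i = w j :=
  stmt_6_general z w f g X hXd hXod heq i j hij hz
end

section
/- Let z, w, f, g ∈ ℝ^m with f ≥ 0 and g ≥ 0 entrywise, and let X ∈ ℝ^{m×m} have zero diagonal and nonpositive off-diagonal entries, such that w(z-w)ᵀ = 𝟙fᵀ + g𝟙ᵀ + X. Then: (a) for all i, w_i(z_i - w_i) ≥ 0; (b) for all i ≠ j, (w_i - w_j)((z_i - z_j) - (w_i - w_j)) ≥ 0. -/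
/-!
Write `A = w (z - w)ᵀ`. Its diagonal is `A i i = f i + g i ≥ 0`, which is (a). For (b), the product
`(w i - w j) ((z - w) i - (z - w) j)` expands to `A i i - A i j - A j i + A j j`; in this combination the
rank-one terms `𝟙 fᵀ` and `g 𝟙ᵀ` cancel, leaving `-X i j - X j i ≥ 0`.
-/

open Matrix

section

variable {ι R : Type*} [CommRing R] {u v f g : ι → R} {X : Matrix ι ι R}

theorem sub_mul_sub_eq_vecMulVec (u v : ι → R) (i j : ι) :
    (u i - u j) * (v i - v j) =
      vecMulVec u v i i - vecMulVec u v i j - vecMulVec u v j i + vecMulVec u v j j := by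
  simp only [vecMulVec_apply]
  ring

theorem mul_eq_of_vecMulVec_eq
    (h : vecMulVec u v = vecMulVec (fun _ => (1 : R)) f + vecMulVec g (fun _ => (1 : R)) + X)
    (i j : ι) : u i * v j = f j + g i + X i j := by
  simpa [vecMulVec_apply] using congrFun (congrFun h i) j

theorem sub_mul_sub_of_vecMulVec_eq
    (h : vecMulVec u v = vecMulVec (fun _ => (1 : R)) f + vecMulVec g (fun _ => (1 : R)) + X)
    (i j : ι) : (u i - u j) * (v i - v j) = X i i + X j j - X i j - X j i := by
  rw [sub_mul_sub_eq_vecMulVec]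
  simp only [vecMulVec_apply, mul_eq_of_vecMulVec_eq h]
  ring

end

/-- Incremental slope[0,1] conditions follow from the dual decomposition. -/
theorem stmt_8 {m : ℕ} (z w f g : Fin m → ℝ)
    (hf : ∀ i, 0 ≤ f i) (hg : ∀ i, 0 ≤ g i)
    (X : Matrix (Fin m) (Fin m) ℝ)
    (hXd : ∀ i, X i i = 0) (hXod : ∀ i j, i ≠ j → X i j ≤ 0)
    (heq : vecMulVec w (z - w) =
      vecMulVec (fun _ => (1 : ℝ)) f + vecMulVec g (fun _ => (1 : ℝ)) + X) :
    (∀ i, 0 ≤ w i * (z i - w i)) ∧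
    (∀ i j, i ≠ j → 0 ≤ (w i - w j) * ((z i - z j) - (w i - w j))) := by
  refine ⟨fun i => ?_, fun i j hij => ?_⟩
  · have hdiag : w i * (z i - w i) = f i + g i + X i i := mul_eq_of_vecMulVec_eq heq i i
    rw [hdiag, hXd i, add_zero]
    exact add_nonneg (hf i) (hg i)
  · have hcross : (w i - w j) * ((z i - z j) - (w i - w j)) = X i i + X j j - X i j - X j i := by
      rw [← sub_mul_sub_of_vecMulVec_eq heq i j, Pi.sub_apply, Pi.sub_apply]
      ring
    rw [hcross, hXd i, hXd j]
    linarith [hXod i j hij, hXod j i hij.symm]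
end

section
/- Let z, w ∈ ℝ^m satisfy: (a) z_i = 0 implies w_i = 0; (b) z_i = z_j implies w_i = w_j; (c) for all i with z_i ≠ 0, 0 ≤ w_i/z_i ≤ 1; (d) for all i ≠ j with z_i ≠ z_j, 0 ≤ (w_i - w_j)/(z_i - z_j) ≤ 1. Then there exists a function φ : ℝ → ℝ that is slope-restricted in [0,1] (i.e., φ(0)=0 and 0 ≤ (φ(p)-φ(q))/(p-q) ≤ 1 for all p ≠ q) with φ(z_i) = w_i for all i = 1,…,m. -/
/-!
Adjoin the origin to the data. The slope conditions then say that along the data, ordered by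
`z`, both `w` and `z - w` are nondecreasing. The function
`x ↦ max_k min (w_k, x - (z_k - w_k))` interpolates such data, and it is nondecreasing together
with `x ↦ x - φ x`, which is exactly a slope in `[0, 1]` between any two points.
-/

open Finset

section SlopeInterpolant

variable {ι : Type*} [Fintype ι] [Nonempty ι]

noncomputable def slopeInterpolant (Z W : ι → ℝ) (x : ℝ) : ℝ :=
  univ.sup' univ_nonempty fun k => min (W k) (x - (Z k - W k))

theorem monotone_slopeInterpolant (Z W : ι → ℝ) : Monotone (slopeInterpolant Z W) :=
  fun _ _ hxy => sup'_mono_fun fun _ _ => min_le_min le_rfl (by linarith)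

theorem monotone_sub_slopeInterpolant (Z W : ι → ℝ) :
    Monotone fun x => x - slopeInterpolant Z W x := by
  intro x y hxy
  suffices slopeInterpolant Z W y ≤ slopeInterpolant Z W x + (y - x) by simp only; linarith
  refine sup'_le _ _ fun k _ => ?_
  calc min (W k) (y - (Z k - W k))
      ≤ min (W k + (y - x)) (x - (Z k - W k) + (y - x)) :=
        min_le_min (by linarith) (by linarith)
    _ = min (W k) (x - (Z k - W k)) + (y - x) := min_add_add_right _ _ _
    _ ≤ slopeInterpolant Z W x + (y - x) := by
        gcongr; exact le_sup' (fun k => min (W k) (x - (Z k - W k))) (mem_univ k)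

theorem slopeInterpolant_apply {Z W : ι → ℝ}
    (hZW : ∀ i j, Z i ≤ Z j → W i ≤ W j ∧ Z i - W i ≤ Z j - W j) (j : ι) :
    slopeInterpolant Z W (Z j) = W j := by
  refine le_antisymm (sup'_le _ _ fun k _ => ?_) (le_sup'_of_le _ (mem_univ j) (by simp))
  rcases le_total (Z k) (Z j) with hkj | hjk
  · exact (min_le_left _ _).trans (hZW k j hkj).1
  · exact (min_le_right _ _).trans (by linarith [(hZW j k hjk).2])

end SlopeInterpolant

theorem slope_mem_unit_of_monotone {φ : ℝ → ℝ} (hφ : Monotone φ)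
    (hid : Monotone fun x => x - φ x) {p q : ℝ} (hpq : p ≠ q) :
    0 ≤ (φ p - φ q) / (p - q) ∧ (φ p - φ q) / (p - q) ≤ 1 := by
  wlog hlt : q < p generalizing p q
  · rw [← neg_div_neg_eq, neg_sub, neg_sub]
    exact this hpq.symm (lt_of_le_of_ne (not_lt.mp hlt) hpq)
  have hpos : 0 < p - q := sub_pos.mpr hlt
  exact ⟨div_nonneg (sub_nonneg.mpr (hφ hlt.le)) hpos.le,
    (div_le_one hpos).mpr (by linarith [hid hlt.le])⟩

theorem le_and_sub_le_of_slope {x y u v : ℝ} (hxy : x < y)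
    (h : 0 ≤ (u - v) / (x - y) ∧ (u - v) / (x - y) ≤ 1) : u ≤ v ∧ x - u ≤ y - v := by
  rw [← neg_div_neg_eq, neg_sub, neg_sub] at h
  have hpos : 0 < y - x := sub_pos.mpr hxy
  rw [div_nonneg_iff, div_le_one hpos] at h
  constructor <;> rcases h with ⟨⟨hvu, -⟩ | ⟨-, hneg⟩, h1⟩ <;> linarith

theorem le_and_sub_le_of_slope_mem_unit {ι : Type*} {Z W : ι → ℝ}
    (heq : ∀ i j, Z i = Z j → W i = W j)
    (hslope : ∀ i j, Z i < Z j →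
      0 ≤ (W i - W j) / (Z i - Z j) ∧ (W i - W j) / (Z i - Z j) ≤ 1)
    (i j : ι) (hij : Z i ≤ Z j) : W i ≤ W j ∧ Z i - W i ≤ Z j - W j := by
  rcases hij.lt_or_eq with hlt | hZ
  · exact le_and_sub_le_of_slope hlt (hslope i j hlt)
  · rw [hZ, heq i j hZ]; exact ⟨le_rfl, le_rfl⟩

/-- Finite data satisfying the incremental slope[0,1] conditions can be interpolated
by a globally slope[0,1]-restricted function. -/
theorem stmt_9 {m : ℕ} (z w : Fin m → ℝ)
    (ha : ∀ i, z i = 0 → w i = 0)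
    (hb : ∀ i j, z i = z j → w i = w j)
    (hc : ∀ i, z i ≠ 0 → 0 ≤ w i / z i ∧ w i / z i ≤ 1)
    (hd : ∀ i j, i ≠ j → z i ≠ z j →
      0 ≤ (w i - w j) / (z i - z j) ∧ (w i - w j) / (z i - z j) ≤ 1) :
    ∃ φ : ℝ → ℝ, φ 0 = 0 ∧
      (∀ p q : ℝ, p ≠ q → 0 ≤ (φ p - φ q) / (p - q) ∧ (φ p - φ q) / (p - q) ≤ 1) ∧
      (∀ i, φ (z i) = w i) := by
  let Z : Option (Fin m) → ℝ := fun o => o.elim 0 z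
  let W : Option (Fin m) → ℝ := fun o => o.elim 0 w
  have heq : ∀ o o', Z o = Z o' → W o = W o' := by
    rintro (_ | i) (_ | j) h
    exacts [rfl, (ha j h.symm).symm, ha i h, hb i j h]
  have hslope : ∀ o o', Z o < Z o' →
      0 ≤ (W o - W o') / (Z o - Z o') ∧ (W o - W o') / (Z o - Z o') ≤ 1 := by
    rintro (_ | i) (_ | j) h
    · exact absurd h (lt_irrefl _)
    · rw [show W none - W (some j) = -w j from zero_sub _,
        show Z none - Z (some j) = -z j from zero_sub _, neg_div_neg_eq]
      exact hc j h.ne'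
    · simpa [Z, W] using hc i h.ne
    · exact hd i j (fun hij => h.ne (congrArg z hij)) h.ne
  have hZW := le_and_sub_le_of_slope_mem_unit heq hslope
  refine ⟨slopeInterpolant Z W, slopeInterpolant_apply hZW none,
    fun p q => slope_mem_unit_of_monotone (monotone_slopeInterpolant Z W)
      (monotone_sub_slopeInterpolant Z W), fun i => slopeInterpolant_apply hZW (some i)⟩
end

section
/- Let z, w ∈ ℝ^m satisfy: (a) z_i = 0 implies w_i = 0; (b) z_i = z_j implies w_i = w_j and z_i = -z_j implies w_i = -w_j; (c) for all i with z_i ≠ 0, 0 ≤ w_i/z_i ≤ 1; (d) for all i ≠ j with z_i ≠ z_j, 0 ≤ (w_i - w_j)/(z_i - z_j) ≤ 1; (e) for all i ≠ j with z_i ≠ -z_j, 0 ≤ (w_i + w_j)/(z_i + z_j) ≤ 1. Then there exists an odd function φ : ℝ → ℝ, slope-restricted in [0,1], with φ(z_i) = w_i and φ(-z_i) = -w_i for all i. -/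
/-!
Replacing the data by their symmetrization `{(±z i, ±w i)}`, conditions (b)–(e) say exactly that
all difference quotients of the data lie in `[0, 1]`, i.e. that `y` and `x - y` are both monotone
along the data. The smallest such interpolant, `t ↦ max_a (y_a + min 0 (t - x_a))`, is a maximum
of functions that are monotone with `t - ·` monotone, hence slope-restricted itself. Its odd part
`t ↦ (ψ t - ψ (-t)) / 2` stays slope-restricted and, the data being symmetric, still interpolates.
-/

open Set

/-- For `X = id` this says that `Y : ℝ → ℝ` is slope-restricted in `[0, 1]`. -/
def SlopeRestricted {ι : Type*} (X Y : ι → ℝ) : Prop :=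
  (∀ a b, X a = X b → Y a = Y b) ∧ ∀ a b, X a ≠ X b → (Y a - Y b) / (X a - X b) ∈ Icc (0 : ℝ) 1

section SlopeRestricted

variable {ι : Type*} {X Y : ι → ℝ}

theorem slopeRestricted_iff :
    SlopeRestricted X Y ↔ ∀ a b, X a ≤ X b → Y a ≤ Y b ∧ X a - Y a ≤ X b - Y b := by
  constructor
  · rintro ⟨heq, hslope⟩ a b hab
    rcases hab.eq_or_lt with h | h
    · rw [heq a b h, h]
      exact ⟨le_rfl, le_rfl⟩
    · have hpos : 0 < X b - X a := sub_pos.2 h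
      obtain ⟨h₀, h₁⟩ := hslope b a h.ne'
      have := (le_div_iff₀ hpos).1 h₀
      have := (div_le_one hpos).1 h₁
      constructor <;> linarith
  · intro h
    refine ⟨fun a b hab => le_antisymm (h a b hab.le).1 (h b a hab.ge).1, fun a b hab => ?_⟩
    wlog hlt : X b < X a generalizing a b
    · have := this b a hab.symm (lt_of_le_of_ne (not_lt.1 hlt) hab)
      rwa [← neg_sub (Y a), ← neg_sub (X a), neg_div_neg_eq] at this
    obtain ⟨h₀, h₁⟩ := h b a hlt.le
    exact ⟨div_nonneg (by linarith) (by linarith), (div_le_one (by linarith)).2 (by linarith)⟩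

theorem slopeRestricted_id_iff {φ : ℝ → ℝ} :
    SlopeRestricted id φ ↔ Monotone φ ∧ Monotone (fun t => t - φ t) := by
  rw [slopeRestricted_iff]
  exact ⟨fun h => ⟨fun p q hpq => (h p q hpq).1, fun p q hpq => (h p q hpq).2⟩,
    fun h p q hpq => ⟨h.1 hpq, h.2 hpq⟩⟩

theorem slopeRestricted_add_min_sub (c d : ℝ) : SlopeRestricted id (fun t => d + min 0 (t - c)) := by
  rw [slopeRestricted_id_iff]
  refine ⟨fun p q hpq => by dsimp only; gcongr, fun p q hpq => ?_⟩
  have key : ∀ t, t - (d + min 0 (t - c)) = max t c - d := fun t => by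
    rcases le_total t c with h | h
    · rw [min_eq_right (by linarith), max_eq_right h]; ring
    · rw [min_eq_left (by linarith), max_eq_left h]; ring
  simp only [key]
  gcongr

theorem SlopeRestricted.finset_sup' {s : Finset ι} (hs : s.Nonempty) {f : ι → ℝ → ℝ}
    (hf : ∀ a ∈ s, SlopeRestricted id (f a)) :
    SlopeRestricted id (fun t => s.sup' hs (f · t)) := by
  simp only [slopeRestricted_id_iff] at hf ⊢
  refine ⟨fun p q hpq => Finset.sup'_mono_fun fun a ha => (hf a ha).1 hpq, fun p q hpq => ?_⟩
  suffices s.sup' hs (f · q) ≤ s.sup' hs (f · p) + (q - p) by dsimp only; linarith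
  refine Finset.sup'_le _ _ fun a ha => ?_
  have := (hf a ha).2 hpq
  have := Finset.le_sup' (f · p) ha
  dsimp only at *
  linarith

theorem SlopeRestricted.oddPart {ψ : ℝ → ℝ} (h : SlopeRestricted id ψ) :
    SlopeRestricted id (fun t => (ψ t - ψ (-t)) / 2) := by
  rw [slopeRestricted_id_iff] at h ⊢
  obtain ⟨h₁, h₂⟩ := h
  refine ⟨fun p q hpq => ?_, fun p q hpq => ?_⟩ <;>
  · have := h₁ hpq
    have := h₁ (neg_le_neg hpq)
    have := h₂ hpq
    have := h₂ (neg_le_neg hpq)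
    dsimp only at *
    linarith

theorem SlopeRestricted.exists_extension [Fintype ι] (h : SlopeRestricted X Y) :
    ∃ φ : ℝ → ℝ, SlopeRestricted id φ ∧ ∀ a, φ (X a) = Y a := by
  rcases isEmpty_or_nonempty ι with _ | _
  · exact ⟨0, slopeRestricted_id_iff.2 ⟨monotone_const, fun p q h => by simpa using h⟩, isEmptyElim⟩
  refine ⟨fun t => Finset.univ.sup' Finset.univ_nonempty (fun a => Y a + min 0 (t - X a)),
    SlopeRestricted.finset_sup' _ fun a _ => slopeRestricted_add_min_sub _ _, fun a => ?_⟩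
  rw [slopeRestricted_iff] at h
  refine le_antisymm (Finset.sup'_le _ _ fun b _ => ?_) ?_
  · rcases le_total (X b) (X a) with hba | hab
    · have := (h b a hba).1
      have := min_le_left 0 (X a - X b)
      linarith
    · have := (h a b hab).2
      have := min_le_right 0 (X a - X b)
      linarith
  · exact (by simp : Y a = Y a + min 0 (X a - X a)).le.trans
      (Finset.le_sup' (fun b => Y b + min 0 (X a - X b)) (Finset.mem_univ a))

theorem SlopeRestricted.exists_odd_extension [Fintype ι] (h : SlopeRestricted X Y)
    (hsymm : ∀ a, ∃ b, X b = -X a ∧ Y b = -Y a) :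
    ∃ φ : ℝ → ℝ, (∀ t, φ (-t) = -φ t) ∧ SlopeRestricted id φ ∧ ∀ a, φ (X a) = Y a := by
  obtain ⟨ψ, hψ, hψX⟩ := h.exists_extension
  refine ⟨fun t => (ψ t - ψ (-t)) / 2, fun t => ?_, hψ.oddPart, fun a => ?_⟩
  · simp only [neg_neg]
    ring
  · obtain ⟨b, hXb, hYb⟩ := hsymm a
    simp only
    rw [← hXb, hψX, hψX, hYb]
    ring

end SlopeRestricted

theorem slopeRestricted_sumElim_neg {m : ℕ} (z w : Fin m → ℝ)
    (hb : ∀ i j, z i = z j → w i = w j)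
    (hb' : ∀ i j, z i = -z j → w i = -w j)
    (hc : ∀ i, z i ≠ 0 → 0 ≤ w i / z i ∧ w i / z i ≤ 1)
    (hd : ∀ i j, i ≠ j → z i ≠ z j →
      0 ≤ (w i - w j) / (z i - z j) ∧ (w i - w j) / (z i - z j) ≤ 1)
    (he : ∀ i j, i ≠ j → z i ≠ -z j →
      0 ≤ (w i + w j) / (z i + z j) ∧ (w i + w j) / (z i + z j) ≤ 1) :
    SlopeRestricted (Sum.elim z (-z)) (Sum.elim w (-w)) := by
  have hmixed : ∀ i j, z i ≠ -z j → (w i + w j) / (z i + z j) ∈ Icc (0 : ℝ) 1 := by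
    intro i j h
    obtain rfl | hij := eq_or_ne i j
    · rw [← two_mul, ← two_mul, mul_div_mul_left _ _ two_ne_zero]
      exact hc i fun h₀ => h (by simp [h₀])
    · exact he i j hij h
  constructor
  · rintro (i | i) (j | j) h <;> simp only [Sum.elim_inl, Sum.elim_inr, Pi.neg_apply, neg_inj] at h ⊢
    · exact hb i j h
    · exact hb' i j h
    · linarith [hb' j i (by linarith)]
    · exact hb i j h
  · rintro (i | i) (j | j) h <;> simp only [Sum.elim_inl, Sum.elim_inr, Pi.neg_apply] at h ⊢
    · exact hd i j (by rintro rfl; exact h rfl) h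
    · rw [sub_neg_eq_add, sub_neg_eq_add]
      exact hmixed i j h
    · rw [← neg_add', ← neg_add', neg_div_neg_eq]
      exact hmixed i j fun h' => h (by linarith)
    · rw [neg_sub_neg, neg_sub_neg]
      exact hd j i (by rintro rfl; exact h rfl) fun h' => h (by linarith)

theorem stmt_10_general {m : ℕ} (z w : Fin m → ℝ)
    (hb : ∀ i j, z i = z j → w i = w j)
    (hb' : ∀ i j, z i = -z j → w i = -w j)
    (hc : ∀ i, z i ≠ 0 → 0 ≤ w i / z i ∧ w i / z i ≤ 1)
    (hd : ∀ i j, i ≠ j → z i ≠ z j →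
      0 ≤ (w i - w j) / (z i - z j) ∧ (w i - w j) / (z i - z j) ≤ 1)
    (he : ∀ i j, i ≠ j → z i ≠ -z j →
      0 ≤ (w i + w j) / (z i + z j) ∧ (w i + w j) / (z i + z j) ≤ 1) :
    ∃ φ : ℝ → ℝ, (∀ t : ℝ, φ (-t) = -φ t) ∧ φ 0 = 0 ∧
      (∀ p q : ℝ, p ≠ q → 0 ≤ (φ p - φ q) / (p - q) ∧ (φ p - φ q) / (p - q) ≤ 1) ∧
      (∀ i, φ (z i) = w i ∧ φ (-z i) = -w i) := by
  obtain ⟨φ, hodd, hφ, hφX⟩ := (slopeRestricted_sumElim_neg z w hb hb' hc hd he).exists_odd_extension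
    fun a => ⟨a.swap, by cases a <;> simp⟩
  have hφ0 : φ 0 = 0 := by linarith [show φ 0 = -φ 0 by simpa using hodd 0]
  exact ⟨φ, hodd, hφ0, hφ.2, fun i => ⟨hφX (.inl i), hφX (.inr i)⟩⟩

/-- Symmetric finite data satisfying the incremental slope[0,1] conditions can be
interpolated by an odd, globally slope[0,1]-restricted function. -/
theorem stmt_10 {m : ℕ} (z w : Fin m → ℝ)
    (ha : ∀ i, z i = 0 → w i = 0)
    (hb : ∀ i j, z i = z j → w i = w j)
    (hb' : ∀ i j, z i = -z j → w i = -w j)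
    (hc : ∀ i, z i ≠ 0 → 0 ≤ w i / z i ∧ w i / z i ≤ 1)
    (hd : ∀ i j, i ≠ j → z i ≠ z j →
      0 ≤ (w i - w j) / (z i - z j) ∧ (w i - w j) / (z i - z j) ≤ 1)
    (he : ∀ i j, i ≠ j → z i ≠ -z j →
      0 ≤ (w i + w j) / (z i + z j) ∧ (w i + w j) / (z i + z j) ≤ 1) :
    ∃ φ : ℝ → ℝ, (∀ t : ℝ, φ (-t) = -φ t) ∧ φ 0 = 0 ∧
      (∀ p q : ℝ, p ≠ q → 0 ≤ (φ p - φ q) / (p - q) ∧ (φ p - φ q) / (p - q) ≤ 1) ∧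
      (∀ i, φ (z i) = w i ∧ φ (-z i) = -w i) :=
  stmt_10_general z w hb hb' hc hd he
end

section
/- Let z, w, f, g ∈ ℝ^m with f, g ≥ 0 entrywise, and X, Z ∈ ℝ^{m×m} with zero diagonals and nonpositive off-diagonal entries. Suppose the diagonal part of w(z-w)ᵀ equals the diagonal part of 𝟙fᵀ + g𝟙ᵀ, the off-diagonal part of w(z-w)ᵀ equals the off-diagonal part of X - Z, and the off-diagonal part of X + Z equals minus the off-diagonal part of 𝟙fᵀ + g𝟙ᵀ. Then for any i ≠ j with z_i = -z_j, it holds that w_i = -w_j. -/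
open Matrix

/-- Diagonal-part projection: keep diagonal entries, zero elsewhere. -/
def Pd {m : ℕ} (M : Matrix (Fin m) (Fin m) ℝ) : Matrix (Fin m) (Fin m) ℝ :=
  Matrix.of fun i j => if i = j then M i j else 0

/-- Off-diagonal-part projection. -/
def Pod {m : ℕ} (M : Matrix (Fin m) (Fin m) ℝ) : Matrix (Fin m) (Fin m) ℝ :=
  M - Pd M

/-!
Add up the equations at the positions `(i,i), (j,j), (i,j), (j,i)`. On the left this is
`(e_i + e_j)ᵀ w (z - w)ᵀ (e_i + e_j) = (w_i + w_j)(z_i + z_j) - (w_i + w_j)² = -(w_i + w_j)²`.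
On the right, the diagonal contributes `f_i + g_i + f_j + g_j`, which the constraint on `X + Z`
cancels against `(X + Z)_{ij} + (X + Z)_{ji}`, leaving `-2 (Z_{ij} + Z_{ji}) ≥ 0`.
Hence `(w_i + w_j)² ≤ 0`.
-/

section Projections

variable {m : ℕ}

theorem Pd_apply_self (M : Matrix (Fin m) (Fin m) ℝ) (i : Fin m) : Pd M i i = M i i := by
  simp [Pd]

theorem Pod_apply_of_ne (M : Matrix (Fin m) (Fin m) ℝ) {i j : Fin m} (hij : i ≠ j) :
    Pod M i j = M i j := by
  simp [Pod, Pd, hij]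

theorem Pod_neg (M : Matrix (Fin m) (Fin m) ℝ) : Pod (-M) = -Pod M := by
  ext i j
  by_cases hij : i = j <;> simp [Pod, Pd, hij]

theorem apply_self_eq_of_Pd_eq {M N : Matrix (Fin m) (Fin m) ℝ} (h : Pd M = Pd N) (i : Fin m) :
    M i i = N i i := by
  simpa only [Pd_apply_self] using congrFun₂ h i i

theorem apply_eq_of_Pod_eq {M N : Matrix (Fin m) (Fin m) ℝ} (h : Pod M = Pod N) {i j : Fin m}
    (hij : i ≠ j) : M i j = N i j := by
  simpa only [Pod_apply_of_ne _ hij] using congrFun₂ h i j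

end Projections

section RankOne

variable {n R : Type*} [CommRing R]

theorem vecMulVec_sub_self_principal_sum (z w : n → R) {i j : n} (hz : z i = -z j) :
    vecMulVec w (z - w) i i + vecMulVec w (z - w) j j +
      vecMulVec w (z - w) i j + vecMulVec w (z - w) j i = -(w i + w j) ^ 2 := by
  simp only [vecMulVec_apply, Pi.sub_apply, hz]
  ring

theorem one_vecMulVec_add_vecMulVec_one_diag_add (f g : n → R) (i j : n) :
    let N : Matrix n n R := vecMulVec (fun _ => 1) f + vecMulVec g (fun _ => 1)
    N i i + N j j = N i j + N j i := by
  simp only [Matrix.add_apply, vecMulVec_apply, one_mul, mul_one]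
  ring

end RankOne

theorem stmt_15_general {m : ℕ} (z w f g : Fin m → ℝ)
    (X Z : Matrix (Fin m) (Fin m) ℝ)
    (hZod : ∀ i j, i ≠ j → Z i j ≤ 0)
    (h1 : Pd (vecMulVec w (z - w)) =
      Pd (vecMulVec (fun _ => (1 : ℝ)) f + vecMulVec g (fun _ => (1 : ℝ))))
    (h2 : Pod (vecMulVec w (z - w)) = Pod (X - Z))
    (h3 : Pod (X + Z) =
      -Pod (vecMulVec (fun _ => (1 : ℝ)) f + vecMulVec g (fun _ => (1 : ℝ))))
    (i j : Fin m) (hij : i ≠ j) (hz : z i = -z j) :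
    w i = -w j := by
  set N := vecMulVec (fun _ => (1 : ℝ)) f + vecMulVec g (fun _ => (1 : ℝ))
  have hXZ {a b : Fin m} (hab : a ≠ b) : X a b + Z a b = -N a b :=
    apply_eq_of_Pod_eq (h3.trans (Pod_neg N).symm) hab
  have hsum : -(w i + w j) ^ 2 = -2 * (Z i j + Z j i) := by
    rw [← vecMulVec_sub_self_principal_sum z w hz, apply_self_eq_of_Pd_eq h1,
      apply_self_eq_of_Pd_eq h1, apply_eq_of_Pod_eq h2 hij, apply_eq_of_Pod_eq h2 hij.symm,
      one_vecMulVec_add_vecMulVec_one_diag_add, Matrix.sub_apply, Matrix.sub_apply]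
    linarith [hXZ hij, hXZ hij.symm]
  have hsq : (w i + w j) ^ 2 = 0 :=
    le_antisymm (by linarith [hZod i j hij, hZod j i hij.symm]) (sq_nonneg _)
  exact eq_neg_of_add_eq_zero_left (pow_eq_zero_iff two_ne_zero |>.mp hsq)

/-- Opposite `z`-components force opposite `w`-components under the dual
decomposition for odd nonlinearities. -/
theorem stmt_15 {m : ℕ} (z w f g : Fin m → ℝ)
    (hf : ∀ i, 0 ≤ f i) (hg : ∀ i, 0 ≤ g i)
    (X Z : Matrix (Fin m) (Fin m) ℝ)
    (hXd : ∀ i, X i i = 0) (hXod : ∀ i j, i ≠ j → X i j ≤ 0)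
    (hZd : ∀ i, Z i i = 0) (hZod : ∀ i j, i ≠ j → Z i j ≤ 0)
    (h1 : Pd (vecMulVec w (z - w)) =
      Pd (vecMulVec (fun _ => (1 : ℝ)) f + vecMulVec g (fun _ => (1 : ℝ))))
    (h2 : Pod (vecMulVec w (z - w)) = Pod (X - Z))
    (h3 : Pod (X + Z) =
      -Pod (vecMulVec (fun _ => (1 : ℝ)) f + vecMulVec g (fun _ => (1 : ℝ))))
    (i j : Fin m) (hij : i ≠ j) (hz : z i = -z j) :
    w i = -w j :=
  stmt_15_general z w f g X Z hZod h1 h2 h3 i j hij hz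
end

section
/- Let φ : ℝ → ℝ be slope-restricted in [0,1] and define the piecewise-linear function ψ through data points (z̄₁,w̄₁),…,(z̄_l,w̄_l) with z̄₁ < ⋯ < z̄_l, w̄_i = φ(z̄_i), given by ψ(z) = w̄₁ for z < z̄₁, ψ(z) = w̄_l for z ≥ z̄_l, and linear interpolation ψ(z) = ((w̄_{i+1}-w̄_i)/(z̄_{i+1}-z̄_i))(z - z̄_i) + w̄_i on [z̄_i, z̄_{i+1}]. If 0 ∈ {z̄₁,…,z̄_l} (so some w̄_i = 0 at z̄_i = 0), then ψ is slope-restricted in [0,1]. -/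
/-- The piecewise-linear interpolant of finitely many points of a slope[0,1]
function (sorted abscissae containing 0, constant extension outside) is itself
slope-restricted in [0,1]. -/
theorem stmt_18 {l : ℕ} (φ : ℝ → ℝ)
    (hφ0 : φ 0 = 0)
    (hφ : ∀ p q : ℝ, p ≠ q → 0 ≤ (φ p - φ q) / (p - q) ∧ (φ p - φ q) / (p - q) ≤ 1)
    (zb wb : Fin (l + 1) → ℝ)
    (hmono : StrictMono zb)
    (hw : ∀ i, wb i = φ (zb i))
    (h0 : ∃ i, zb i = 0)
    (ψ : ℝ → ℝ)
    (hlo : ∀ z : ℝ, z < zb 0 → ψ z = wb 0)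
    (hhi : ∀ z : ℝ, zb (Fin.last l) ≤ z → ψ z = wb (Fin.last l))
    (hmid : ∀ i : Fin l, ∀ z : ℝ, zb i.castSucc ≤ z → z ≤ zb i.succ →
      ψ z = (wb i.succ - wb i.castSucc) / (zb i.succ - zb i.castSucc)
        * (z - zb i.castSucc) + wb i.castSucc) :
    ψ 0 = 0 ∧
    (∀ p q : ℝ, p ≠ q → 0 ≤ (ψ p - ψ q) / (p - q) ∧ (ψ p - ψ q) / (p - q) ≤ 1) := by
  -- ψ agrees with wb at the nodes
  have hψval : ∀ i : Fin (l + 1), ψ (zb i) = wb i := by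
    intro i
    rcases eq_or_ne i (Fin.last l) with h | h
    · rw [h]; exact hhi _ le_rfl
    · obtain ⟨j, rfl⟩ := Fin.exists_castSucc_eq.2 h
      rw [hmid j (zb j.castSucc) le_rfl (le_of_lt (hmono (Fin.castSucc_lt_succ : j.castSucc < j.succ)))]
      ring
  -- slope of each segment is in [0,1]
  have hslope : ∀ i : Fin l,
      0 ≤ (wb i.succ - wb i.castSucc) / (zb i.succ - zb i.castSucc) ∧
      (wb i.succ - wb i.castSucc) / (zb i.succ - zb i.castSucc) ≤ 1 := by
    intro i
    rw [hw, hw]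
    exact hφ _ _ (ne_of_gt (hmono (Fin.castSucc_lt_succ : i.castSucc < i.succ)))
  -- local increment bounds on each segment
  have hloc : ∀ i : Fin l, ∀ p q : ℝ, zb i.castSucc ≤ p → p ≤ q → q ≤ zb i.succ →
      0 ≤ ψ q - ψ p ∧ ψ q - ψ p ≤ q - p := by
    intro i p q h1 h2 h3
    have hp := hmid i p h1 (h2.trans h3)
    have hq := hmid i q (h1.trans h2) h3
    obtain ⟨s0, s1⟩ := hslope i
    rw [hp, hq]
    have key : (wb i.succ - wb i.castSucc) / (zb i.succ - zb i.castSucc) * (q - zb i.castSucc)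
        + wb i.castSucc - ((wb i.succ - wb i.castSucc) / (zb i.succ - zb i.castSucc)
        * (p - zb i.castSucc) + wb i.castSucc)
        = (wb i.succ - wb i.castSucc) / (zb i.succ - zb i.castSucc) * (q - p) := by ring
    rw [key]
    constructor
    · exact mul_nonneg s0 (by linarith)
    · nlinarith
  -- glue: increment bounds up to each node
  have hK : ∀ i : Fin (l + 1), ∀ p q : ℝ, p ≤ q → q ≤ zb i →
      0 ≤ ψ q - ψ p ∧ ψ q - ψ p ≤ q - p := by
    intro i
    induction i using Fin.induction with
    | zero =>
      intro p q hpq hq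
      have hp : ψ p = wb 0 := by
        rcases lt_or_eq_of_le (hpq.trans hq) with h | h
        · exact hlo p h
        · rw [h]; exact hψval 0
      have hq' : ψ q = wb 0 := by
        rcases lt_or_eq_of_le hq with h | h
        · exact hlo q h
        · rw [h]; exact hψval 0
      rw [hp, hq']
      constructor <;> linarith
    | succ i ih =>
      intro p q hpq hq
      by_cases hq' : q ≤ zb i.castSucc
      · exact ih p q hpq hq'
      push_neg at hq'
      by_cases hp' : zb i.castSucc ≤ p
      · exact hloc i p q hp' hpq hq
      push_neg at hp'
      obtain ⟨a1, a2⟩ := ih p (zb i.castSucc) hp'.le le_rfl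
      obtain ⟨b1, b2⟩ := hloc i (zb i.castSucc) q le_rfl hq'.le hq
      constructor <;> linarith
  -- global increment bounds
  have hG : ∀ p q : ℝ, p ≤ q → 0 ≤ ψ q - ψ p ∧ ψ q - ψ p ≤ q - p := by
    intro p q hpq
    by_cases hq : q ≤ zb (Fin.last l)
    · exact hK (Fin.last l) p q hpq hq
    push_neg at hq
    by_cases hp : zb (Fin.last l) ≤ p
    · rw [hhi p hp, hhi q hq.le]
      constructor <;> linarith
    push_neg at hp
    obtain ⟨a1, a2⟩ := hK (Fin.last l) p (zb (Fin.last l)) hp.le le_rfl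
    rw [hψval (Fin.last l)] at a1 a2
    rw [hhi q hq.le]
    constructor <;> linarith
  constructor
  · obtain ⟨i, hi⟩ := h0
    have h := hψval i
    rw [hi, hw, hi, hφ0] at h
    exact h
  · intro p q hne
    rcases lt_or_gt_of_ne hne with h | h
    · have e : (ψ p - ψ q) / (p - q) = (ψ q - ψ p) / (q - p) := by
        rw [div_eq_div_iff (sub_ne_zero.2 hne) (sub_ne_zero.2 hne.symm)]; ring
      obtain ⟨a1, a2⟩ := hG p q h.le
      rw [e]
      exact ⟨div_nonneg a1 (by linarith), (div_le_one (by linarith)).2 a2⟩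
    · obtain ⟨a1, a2⟩ := hG q p h.le
      exact ⟨div_nonneg a1 (by linarith), (div_le_one (by linarith)).2 a2⟩
end
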